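/- arXiv:2503.11822 — 8 statements merged into one kernel-verified Lean document; each statement's English description precedes it below -/
import Mathlib

section
/- Let (Ω, P) be a probability space and T1, T2 : Ω → R measurable random variables that are exchangeable, i.e., the joint law of (T1, T2) equals the joint law of (T2, T1). Then E[exp(T1 - max(T1,T2))] = E[exp(T2 - max(T1,T2))] = (1 + E[exp(-|T1 - T2|)]) / 2. -/
/-!
Exchangeability makes `exp (T1 - max T1 T2)` and `exp (T2 - max T1 T2)` identically distributed,
so they have the same mean. Pointwise, one of the two exponents is `0` and the other is
`-|T1 - T2|`, so their sum is `1 + exp (-|T1 - T2|)`; taking expectations gives the value.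
-/

open MeasureTheory ProbabilityTheory

theorem Real.exp_sub_max_add_exp_sub_max (a b : ℝ) :
    Real.exp (a - max a b) + Real.exp (b - max a b) = 1 + Real.exp (-|a - b|) := by
  rcases le_total a b with hab | hba
  · rw [max_eq_right hab, abs_of_nonpos (sub_nonpos.2 hab), neg_neg, sub_self, Real.exp_zero,
      add_comm]
  · rw [max_eq_left hba, abs_of_nonneg (sub_nonneg.2 hba), sub_self, Real.exp_zero, neg_sub]

theorem MeasureTheory.Integrable.exp_of_nonpos {Ω : Type*} [MeasurableSpace Ω] {μ : Measure Ω}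
    [IsFiniteMeasure μ] {f : Ω → ℝ} (hf : Measurable f) (hf_nonpos : ∀ ω, f ω ≤ 0) :
    Integrable (fun ω => Real.exp (f ω)) μ :=
  Integrable.of_bound hf.exp.aestronglyMeasurable 1 <| ae_of_all _ fun ω => by
    rw [Real.norm_of_nonneg (Real.exp_nonneg _)]
    exact Real.exp_le_one_iff.2 (hf_nonpos ω)

theorem exchangeable_normalizing_constant
    {Ω : Type*} [MeasurableSpace Ω] (P : Measure Ω) [IsProbabilityMeasure P]
    (T1 T2 : Ω → ℝ) (hT1 : Measurable T1) (hT2 : Measurable T2)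
    (hexch : P.map (fun ω => (T1 ω, T2 ω)) = P.map (fun ω => (T2 ω, T1 ω))) :
    (∫ ω, Real.exp (T1 ω - max (T1 ω) (T2 ω)) ∂P
        = ∫ ω, Real.exp (T2 ω - max (T1 ω) (T2 ω)) ∂P) ∧
    ∫ ω, Real.exp (T1 ω - max (T1 ω) (T2 ω)) ∂P
        = (1 + ∫ ω, Real.exp (-|T1 ω - T2 ω|) ∂P) / 2 := by
  have hident : IdentDistrib (fun ω => (T1 ω, T2 ω)) (fun ω => (T2 ω, T1 ω)) P P :=
    ⟨(hT1.prodMk hT2).aemeasurable, (hT2.prodMk hT1).aemeasurable, hexch⟩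
  have hsymm : ∫ ω, Real.exp (T1 ω - max (T1 ω) (T2 ω)) ∂P
      = ∫ ω, Real.exp (T2 ω - max (T1 ω) (T2 ω)) ∂P := by
    have hf : Measurable fun p : ℝ × ℝ => Real.exp (p.1 - max p.1 p.2) := by fun_prop
    simpa only [Function.comp_def, max_comm (T2 _)] using (hident.comp hf).integral_eq
  have hsum : ∫ ω, Real.exp (T1 ω - max (T1 ω) (T2 ω)) ∂P
      + ∫ ω, Real.exp (T2 ω - max (T1 ω) (T2 ω)) ∂P
      = 1 + ∫ ω, Real.exp (-|T1 ω - T2 ω|) ∂P := by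
    rw [← integral_add
      (Integrable.exp_of_nonpos (by fun_prop) fun ω => sub_nonpos.2 (le_max_left _ _))
      (Integrable.exp_of_nonpos (by fun_prop) fun ω => sub_nonpos.2 (le_max_right _ _)),
      integral_congr_ae (ae_of_all _ fun ω => Real.exp_sub_max_add_exp_sub_max (T1 ω) (T2 ω)),
      integral_add (integrable_const 1)
        (Integrable.exp_of_nonpos (by fun_prop) fun ω => neg_nonpos.2 (abs_nonneg _)),
      integral_const, probReal_univ, one_smul]
  exact ⟨hsymm, by linarith⟩
end

section
/- Let (Ω, P) be a probability space and T1, T2 : Ω → R measurable random variables that are exchangeable, i.e., the joint law of (T1, T2) equals the joint law of (T2, T1). Set c = E[exp(T1 - max(T1,T2))] (which is strictly positive). Then E[min(exp(T1 - max(T1,T2))/c, exp(T2 - max(T1,T2))/c)] = 2·E[exp(-|T1 - T2|)] / (1 + E[exp(-|T1 - T2|)]). -/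
open MeasureTheory

theorem exchangeable_chi_formula
    {Ω : Type*} [MeasurableSpace Ω] (P : Measure Ω) [IsProbabilityMeasure P]
    (T1 T2 : Ω → ℝ) (hT1 : Measurable T1) (hT2 : Measurable T2)
    (hexch : P.map (fun ω => (T1 ω, T2 ω)) = P.map (fun ω => (T2 ω, T1 ω)))
    (c : ℝ) (hc : c = ∫ ω, Real.exp (T1 ω - max (T1 ω) (T2 ω)) ∂P) :
    0 < c ∧
    ∫ ω, min (Real.exp (T1 ω - max (T1 ω) (T2 ω)) / c)
             (Real.exp (T2 ω - max (T1 ω) (T2 ω)) / c) ∂P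
      = 2 * (∫ ω, Real.exp (-|T1 ω - T2 ω|) ∂P)
          / (1 + ∫ ω, Real.exp (-|T1 ω - T2 ω|) ∂P) := by
  have hMm : Measurable fun ω => max (T1 ω) (T2 ω) := hT1.max hT2
  have hf : Measurable fun ω => Real.exp (T1 ω - max (T1 ω) (T2 ω)) := (hT1.sub hMm).exp
  have hg : Measurable fun ω => Real.exp (T2 ω - max (T1 ω) (T2 ω)) := (hT2.sub hMm).exp
  have hh : Measurable fun ω => Real.exp (-|T1 ω - T2 ω|) := ((hT1.sub hT2).abs.neg).exp
  have bound : ∀ (u : Ω → ℝ), Measurable u → (∀ ω, u ω ≤ 0) →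
      Integrable (fun ω => Real.exp (u ω)) P := by
    intro u hu hb
    apply Integrable.mono' (integrable_const (1 : ℝ)) hu.exp.aestronglyMeasurable
    filter_upwards with ω
    rw [Real.norm_eq_abs, abs_of_pos (Real.exp_pos _)]
    exact Real.exp_le_one_iff.mpr (hb ω)
  have hif : Integrable (fun ω => Real.exp (T1 ω - max (T1 ω) (T2 ω))) P :=
    bound _ (hT1.sub hMm) fun ω => sub_nonpos.mpr (le_max_left _ _)
  have hig : Integrable (fun ω => Real.exp (T2 ω - max (T1 ω) (T2 ω))) P :=
    bound _ (hT2.sub hMm) fun ω => sub_nonpos.mpr (le_max_right _ _)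
  have hih : Integrable (fun ω => Real.exp (-|T1 ω - T2 ω|)) P :=
    bound _ (hT1.sub hT2).abs.neg fun ω => neg_nonpos.mpr (abs_nonneg _)
  set I := ∫ ω, Real.exp (-|T1 ω - T2 ω|) ∂P with hI
  -- exchangeability: ∫ f = ∫ g
  have key : ∫ ω, Real.exp (T1 ω - max (T1 ω) (T2 ω)) ∂P
      = ∫ ω, Real.exp (T2 ω - max (T1 ω) (T2 ω)) ∂P := by
    have hmeas : Measurable fun p : ℝ × ℝ => Real.exp (p.1 - max p.1 p.2) :=
      (measurable_fst.sub (measurable_fst.max measurable_snd)).exp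
    have h1 : ∫ ω, Real.exp (T1 ω - max (T1 ω) (T2 ω)) ∂P
        = ∫ p : ℝ × ℝ, Real.exp (p.1 - max p.1 p.2) ∂(P.map fun ω => (T1 ω, T2 ω)) := by
      rw [integral_map (hT1.prodMk hT2).aemeasurable hmeas.aestronglyMeasurable]
    rw [h1, hexch, integral_map (hT2.prodMk hT1).aemeasurable hmeas.aestronglyMeasurable]
    simp only [max_comm]
  -- pointwise sum
  have hsum_pt : ∀ ω, Real.exp (T1 ω - max (T1 ω) (T2 ω))
      + Real.exp (T2 ω - max (T1 ω) (T2 ω)) = 1 + Real.exp (-|T1 ω - T2 ω|) := by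
    intro ω
    rcases le_total (T1 ω) (T2 ω) with h | h
    · rw [max_eq_right h, abs_of_nonpos (sub_nonpos.mpr h), sub_self, Real.exp_zero,
        neg_neg, add_comm]
    · rw [max_eq_left h, abs_of_nonneg (sub_nonneg.mpr h), sub_self, Real.exp_zero]
      ring_nf
  -- pointwise min
  have hmin_pt : ∀ ω, min (Real.exp (T1 ω - max (T1 ω) (T2 ω)))
      (Real.exp (T2 ω - max (T1 ω) (T2 ω))) = Real.exp (-|T1 ω - T2 ω|) := by
    intro ω
    rcases le_total (T1 ω) (T2 ω) with h | h
    · rw [max_eq_right h, abs_of_nonpos (sub_nonpos.mpr h), sub_self, Real.exp_zero, neg_neg]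
      exact min_eq_left (Real.exp_le_one_iff.mpr (sub_nonpos.mpr h))
    · rw [max_eq_left h, abs_of_nonneg (sub_nonneg.mpr h), sub_self, Real.exp_zero]
      rw [min_eq_right (Real.exp_le_one_iff.mpr (sub_nonpos.mpr h))]
      ring_nf
  have hI0 : 0 ≤ I := integral_nonneg fun ω => (Real.exp_pos _).le
  have h2c : c + c = 1 + I := by
    rw [hc]
    nth_rewrite 2 [key]
    rw [← integral_add hif hig]
    have : ∫ ω, (Real.exp (T1 ω - max (T1 ω) (T2 ω)) + Real.exp (T2 ω - max (T1 ω) (T2 ω))) ∂P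
        = ∫ ω, (1 + Real.exp (-|T1 ω - T2 ω|)) ∂P := by
      exact integral_congr_ae (Filter.Eventually.of_forall hsum_pt)
    rw [this, integral_add (integrable_const 1) hih, integral_const]
    simp [hI]
  have hcpos : 0 < c := by linarith [hI0]
  refine ⟨hcpos, ?_⟩
  have hlhs : ∫ ω, min (Real.exp (T1 ω - max (T1 ω) (T2 ω)) / c)
      (Real.exp (T2 ω - max (T1 ω) (T2 ω)) / c) ∂P = I / c := by
    have : ∀ ω, min (Real.exp (T1 ω - max (T1 ω) (T2 ω)) / c)
        (Real.exp (T2 ω - max (T1 ω) (T2 ω)) / c) = Real.exp (-|T1 ω - T2 ω|) / c := by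
      intro ω
      rw [div_eq_mul_inv, div_eq_mul_inv, div_eq_mul_inv,
        ← min_mul_of_nonneg _ _ (inv_nonneg.mpr hcpos.le), hmin_pt ω]
    rw [integral_congr_ae (Filter.Eventually.of_forall this), integral_div]
  rw [hlhs]
  have h1I : (1 : ℝ) + I ≠ 0 := by linarith
  have hc2 : c = (1 + I) / 2 := by linarith
  rw [hc2]
  field_simp
end

section
/- Let (Ω, P) be a probability space and T1, T2 : Ω → R measurable random variables that are exchangeable, i.e., the joint law of (T1, T2) equals the joint law of (T2, T1). Set c = E[exp(T1 - max(T1,T2))] (which is strictly positive). Then E[max(exp(T1 - max(T1,T2))/c, exp(T2 - max(T1,T2))/c)] = 2 / (1 + E[exp(-|T1 - T2|)]). -/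
/-!
Write `x̄ = max x y`. Pointwise, `max (exp (x - x̄)) (exp (y - x̄)) = 1`, so the left-hand side is
`1 / c`; and `exp (x - x̄) + exp (y - x̄) = 1 + exp (-|x - y|)`. Exchangeability makes the two
summands have the same expectation `c`, hence `2 c = 1 + E[exp (-|T₁ - T₂|)]`, which is `≥ 1`.
-/

open MeasureTheory

namespace Real

theorem exp_sub_max_le_one (x y : ℝ) : exp (x - max x y) ≤ 1 :=
  exp_le_one_iff.mpr (sub_nonpos.mpr (le_max_left x y))

theorem max_exp_sub_max_eq_one (x y : ℝ) :
    max (exp (x - max x y)) (exp (y - max x y)) = 1 := by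
  rw [← exp_monotone.map_max, max_sub_sub_right, sub_self, exp_zero]

theorem exp_sub_max_add_exp_sub_max_s5 (x y : ℝ) :
    exp (x - max x y) + exp (y - max x y) = 1 + exp (-|x - y|) := by
  rcases le_total x y with h | h
  · rw [max_eq_right h, abs_of_nonpos (sub_nonpos.mpr h), neg_neg, sub_self, exp_zero, add_comm]
  · rw [max_eq_left h, abs_of_nonneg (sub_nonneg.mpr h), neg_sub, sub_self, exp_zero]

end Real

theorem MeasureTheory.integral_comp_swap_of_map_prodMk_eq {Ω α E : Type*} [MeasurableSpace Ω]
    [MeasurableSpace α] [NormedAddCommGroup E] [NormedSpace ℝ E] {P : Measure Ω} {X Y : Ω → α}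
    (hX : AEMeasurable X P) (hY : AEMeasurable Y P)
    (hXY : P.map (fun ω => (X ω, Y ω)) = P.map (fun ω => (Y ω, X ω)))
    {g : α × α → E} (hg : StronglyMeasurable g) :
    ∫ ω, g (Y ω, X ω) ∂P = ∫ ω, g (X ω, Y ω) ∂P := by
  rw [← integral_map (hY.prodMk hX) hg.aestronglyMeasurable, ← hXY,
    integral_map (hX.prodMk hY) hg.aestronglyMeasurable]

theorem MeasureTheory.integrable_exp_sub_max {Ω : Type*} [MeasurableSpace Ω] {P : Measure Ω}
    [IsFiniteMeasure P] {X Y : Ω → ℝ} (hX : Measurable X) (hY : Measurable Y) :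
    Integrable (fun ω => Real.exp (X ω - max (X ω) (Y ω))) P :=
  .of_bound (hX.sub (hX.max hY)).exp.aestronglyMeasurable 1 <| .of_forall fun ω => by
    rw [Real.norm_of_nonneg (Real.exp_pos _).le]
    exact Real.exp_sub_max_le_one _ _

theorem exchangeable_omega_formula
    {Ω : Type*} [MeasurableSpace Ω] (P : Measure Ω) [IsProbabilityMeasure P]
    (T1 T2 : Ω → ℝ) (hT1 : Measurable T1) (hT2 : Measurable T2)
    (hexch : P.map (fun ω => (T1 ω, T2 ω)) = P.map (fun ω => (T2 ω, T1 ω)))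
    (c : ℝ) (hc : c = ∫ ω, Real.exp (T1 ω - max (T1 ω) (T2 ω)) ∂P) :
    0 < c ∧
    ∫ ω, max (Real.exp (T1 ω - max (T1 ω) (T2 ω)) / c)
             (Real.exp (T2 ω - max (T1 ω) (T2 ω)) / c) ∂P
      = 2 / (1 + ∫ ω, Real.exp (-|T1 ω - T2 ω|) ∂P) := by
  have hswap : ∫ ω, Real.exp (T2 ω - max (T1 ω) (T2 ω)) ∂P = c := by
    simp_rw [max_comm (T1 _), hc]
    exact integral_comp_swap_of_map_prodMk_eq hT1.aemeasurable hT2.aemeasurable hexch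
      (g := fun p => Real.exp (p.1 - max p.1 p.2)) (by fun_prop)
  have h2c : 2 * c = 1 + ∫ ω, Real.exp (-|T1 ω - T2 ω|) ∂P := by
    have hint : Integrable (fun ω => Real.exp (-|T1 ω - T2 ω|)) P :=
      .of_bound (hT1.sub hT2).abs.neg.exp.aestronglyMeasurable 1 <| .of_forall fun ω => by
        simp [abs_nonneg]
    calc 2 * c = ∫ ω, (Real.exp (T1 ω - max (T1 ω) (T2 ω))
          + Real.exp (T2 ω - max (T1 ω) (T2 ω))) ∂P := by
          rw [integral_add (integrable_exp_sub_max hT1 hT2), hswap, ← hc, two_mul]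
          simpa only [max_comm (T1 _)] using integrable_exp_sub_max hT2 hT1
      _ = 1 + ∫ ω, Real.exp (-|T1 ω - T2 ω|) ∂P := by
          simp_rw [Real.exp_sub_max_add_exp_sub_max_s5]
          rw [integral_add (integrable_const 1) hint, integral_const, probReal_univ, one_smul]
  have hc_pos : 0 < c := by
    have : 0 ≤ ∫ ω, Real.exp (-|T1 ω - T2 ω|) ∂P := integral_nonneg fun ω => (Real.exp_pos _).le
    linarith
  refine ⟨hc_pos, ?_⟩
  simp_rw [max_div_div_right hc_pos.le, Real.max_exp_sub_max_eq_one, integral_const,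
    probReal_univ, one_smul, ← h2c]
  field_simp
end

section
/- Let E be an exponential random variable with rate 1 on a probability space (Ω, P), and let S be a real-valued random variable with S ≤ 0 almost surely, independent of E. Then for every z ≥ 0, P(E + S > z) = exp(-z) · E[exp(S)]; in particular E[exp(S)] > 0 and P(E + S > z | E + S > 0) = exp(-z). -/
/-!
By independence, `P(E + S > z) = ∫ P(E > z - s) dP_S(s)`, and since `z - s ≥ 0` on the support
of `P_S`, the exponential tail turns the integrand into `exp(-z) · exp(s)`. The conditional
statement is the ratio of this tail formula at `z` and at `0`.
-/

open MeasureTheory ProbabilityTheory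

section

variable {Ω : Type*} [MeasurableSpace Ω] {P : Measure Ω}

theorem integrable_exp_of_ae_nonpos [IsFiniteMeasure P] {S : Ω → ℝ} (hS : AEMeasurable S P)
    (hSneg : ∀ᵐ ω ∂P, S ω ≤ 0) : Integrable (fun ω => Real.exp (S ω)) P := by
  refine (integrable_const (1 : ℝ)).mono'
    (Real.measurable_exp.comp_aemeasurable hS).aestronglyMeasurable ?_
  filter_upwards [hSneg] with ω hω
  rw [Real.norm_eq_abs, abs_of_pos (Real.exp_pos _)]
  exact Real.exp_le_one_iff.mpr hω

theorem ProbabilityTheory.IndepFun.measure_lt_add [IsFiniteMeasure P] {X Y : Ω → ℝ}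
    (hX : Measurable X) (hY : Measurable Y) (hXY : IndepFun X Y P) (z : ℝ) :
    P {ω | z < X ω + Y ω} = ∫⁻ y, P {ω | z - y < X ω} ∂(P.map Y) := by
  have hmeas : MeasurableSet {p : ℝ × ℝ | z < p.2 + p.1} :=
    measurableSet_lt measurable_const (measurable_snd.add measurable_fst)
  have hmap : P.map (fun ω => (Y ω, X ω)) = (P.map Y).prod (P.map X) :=
    (indepFun_iff_map_prod_eq_prod_map_map hY.aemeasurable hX.aemeasurable).mp hXY.symm
  calc P {ω | z < X ω + Y ω}
      = (P.map (fun ω => (Y ω, X ω))) {p : ℝ × ℝ | z < p.2 + p.1} :=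
        (Measure.map_apply (hY.prodMk hX) hmeas).symm
    _ = ∫⁻ y, (P.map X) (Set.Ioi (z - y)) ∂(P.map Y) := by
        rw [hmap, Measure.prod_apply hmeas]
        congr! with y
        ext x
        simp [sub_lt_iff_lt_add]
    _ = ∫⁻ y, P {ω | z - y < X ω} ∂(P.map Y) := by
        simp_rw [Measure.map_apply hX measurableSet_Ioi]
        rfl

theorem measure_lt_add_of_exponential_tail [IsFiniteMeasure P] {E S : Ω → ℝ}
    (hE : Measurable E) (hS : Measurable S)
    (hExp : ∀ x : ℝ, 0 ≤ x → P {ω | x < E ω} = ENNReal.ofReal (Real.exp (-x)))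
    (hSneg : ∀ᵐ ω ∂P, S ω ≤ 0) (hIndep : IndepFun E S P) {z : ℝ} (hz : 0 ≤ z) :
    P {ω | z < E ω + S ω} = ENNReal.ofReal (Real.exp (-z) * ∫ ω, Real.exp (S ω) ∂P) := by
  have hSae : ∀ᵐ s ∂(P.map S), s ≤ 0 :=
    (ae_map_iff hS.aemeasurable measurableSet_Iic).mpr hSneg
  have htail : ∀ᵐ s ∂(P.map S), P {ω | z - s < E ω}
      = ENNReal.ofReal (Real.exp (-z)) * ENNReal.ofReal (Real.exp s) := by
    filter_upwards [hSae] with s hs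
    rw [hExp (z - s) (by linarith), ← ENNReal.ofReal_mul (Real.exp_pos _).le, ← Real.exp_add]
    ring_nf
  rw [hIndep.measure_lt_add hE hS, lintegral_congr_ae htail,
    lintegral_const_mul' _ _ ENNReal.ofReal_ne_top,
    lintegral_map (by fun_prop) hS,
    ← ofReal_integral_eq_lintegral_ofReal (integrable_exp_of_ae_nonpos hS.aemeasurable hSneg)
      (Filter.Eventually.of_forall fun ω => (Real.exp_pos _).le),
    ← ENNReal.ofReal_mul (Real.exp_pos _).le]

end

theorem exp_plus_neg_shift_tail
    {Ω : Type*} [MeasurableSpace Ω] (P : Measure Ω) [IsProbabilityMeasure P]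
    (E S : Ω → ℝ) (hE : Measurable E) (hS : Measurable S)
    (hExp : ∀ x : ℝ, 0 ≤ x → P {ω | x < E ω} = ENNReal.ofReal (Real.exp (-x)))
    (hSneg : ∀ᵐ ω ∂P, S ω ≤ 0)
    (hIndep : IndepFun E S P) :
    0 < (∫ ω, Real.exp (S ω) ∂P) ∧
    ∀ z : ℝ, 0 ≤ z →
      P {ω | z < E ω + S ω}
          = ENNReal.ofReal (Real.exp (-z) * ∫ ω, Real.exp (S ω) ∂P) ∧
      (ProbabilityTheory.cond P {ω | 0 < E ω + S ω}) {ω | z < E ω + S ω}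
          = ENNReal.ofReal (Real.exp (-z)) := by
  set I := ∫ ω, Real.exp (S ω) ∂P
  have hIpos : 0 < I := integral_exp_pos (integrable_exp_of_ae_nonpos hS.aemeasurable hSneg)
  have htail := fun z (hz : 0 ≤ z) => measure_lt_add_of_exponential_tail hE hS hExp hSneg hIndep hz
  refine ⟨hIpos, fun z hz => ⟨htail z hz, ?_⟩⟩
  have hsub : {ω | z < E ω + S ω} ⊆ {ω | 0 < E ω + S ω} := fun ω hω => hz.trans_lt hω
  rw [cond_apply (measurableSet_lt measurable_const (by fun_prop)),
    Set.inter_eq_self_of_subset_right hsub, htail z hz, htail 0 le_rfl, neg_zero, Real.exp_zero,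
    one_mul, ENNReal.ofReal_mul (Real.exp_pos _).le, mul_left_comm,
    ENNReal.inv_mul_cancel (by simpa using hIpos) ENNReal.ofReal_ne_top, mul_one]
end

section
/- Let d ≥ 1 and let f : R^d → [0,∞) be a measurable function with ∫_{R^d} f = 1. Then ∫_{R^d} 1{max_j z_j > 0} · exp(-max_j z_j) · (∫_R f(z + s·1) ds) dz = 1, where 1 denotes the all-ones vector in R^d. -/
open MeasureTheory
open scoped ENNReal

theorem mgpd_T_density_integrates_to_one
    (d : ℕ) (hd : 0 < d) (f : (Fin d → ℝ) → ℝ)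
    (hmeas : Measurable f) (hnonneg : ∀ z, 0 ≤ f z)
    (hint : ∫ z : Fin d → ℝ, f z = 1) :
    ∫ z : Fin d → ℝ,
      (if 0 < Finset.univ.sup' ⟨⟨0, hd⟩, Finset.mem_univ _⟩ z then
        Real.exp (-(Finset.univ.sup' ⟨⟨0, hd⟩, Finset.mem_univ _⟩ z)) *
          ∫ s : ℝ, f (fun j => z j + s)
      else 0) = 1 := by
  classical
  have ne1 : (Finset.univ : Finset (Fin d)).Nonempty := ⟨⟨0, hd⟩, Finset.mem_univ _⟩
  set M : (Fin d → ℝ) → ℝ := fun z => Finset.univ.sup' ne1 z with hMdef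
  have hMmeas : Measurable M := by
    have h := Finset.measurable_sup' (f := fun (i : Fin d) (z : Fin d → ℝ) => z i)
      ne1 (fun i _ => measurable_pi_apply i)
    convert h using 1
    ext z
    rw [Finset.sup'_apply]
  have hMadd : ∀ (z : Fin d → ℝ) (s : ℝ), M (z + fun _ => s) = M z + s := by
    intro z s
    exact (Finset.sup'_add Finset.univ z s ne1).symm
  set c : ℝ → (Fin d → ℝ) := fun s _ => s with hc
  set E : (Fin d → ℝ) → ℝ≥0∞ :=
    fun z => if 0 < M z then ENNReal.ofReal (Real.exp (-M z)) else 0 with hE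
  set F : (Fin d → ℝ) → ℝ≥0∞ := fun z => ENNReal.ofReal (f z) with hF
  have hEmeas : Measurable E :=
    Measurable.ite (measurableSet_lt measurable_const hMmeas)
      (ENNReal.measurable_ofReal.comp ((Real.measurable_exp.comp hMmeas.neg)))
      measurable_const
  have hFmeas : Measurable F := ENNReal.measurable_ofReal.comp hmeas
  have haddmeas : Measurable (fun p : (Fin d → ℝ) × ℝ => p.1 + c p.2) := by
    refine measurable_pi_lambda _ fun j => ?_
    exact ((measurable_pi_apply j).comp measurable_fst).add measurable_snd
  -- Step 1: lintegral of F is 1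
  have hF1 : ∫⁻ z, F z = 1 := by
    have h := integral_eq_lintegral_of_nonneg_ae (μ := (volume : Measure (Fin d → ℝ)))
      (Filter.Eventually.of_forall hnonneg) hmeas.aestronglyMeasurable
    rw [hint] at h
    rw [← ENNReal.toReal_eq_one_iff]
    exact h.symm
  -- the inner exponential lintegral equals 1
  have hMsub : ∀ (z : Fin d → ℝ) (s : ℝ), M (z - c s) = M z - s := by
    intro z s
    have h := hMadd z (-s)
    rw [show z - c s = z + (fun _ => -s) from funext fun j => by
      simp [hc, sub_eq_add_neg], h, ← sub_eq_add_neg]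
  have hexp1 : ∀ z : Fin d → ℝ, ∫⁻ s : ℝ, E (z - c s) = 1 := by
    intro z
    have hEeq : (fun s : ℝ => E (z - c s))
        = Set.indicator (Set.Iio (M z)) (fun s => ENNReal.ofReal (Real.exp (s - M z))) := by
      funext s
      have hcond : E (z - c s) = if 0 < M z - s then
          ENNReal.ofReal (Real.exp (-(M z - s))) else 0 := by
        simp only [hE, hMsub z s]
      by_cases hs : s < M z
      · rw [hcond, if_pos (by linarith), Set.indicator_of_mem (by exact hs), neg_sub]
      · rw [hcond, if_neg (by intro h; exact hs (by linarith)),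
          Set.indicator_of_notMem (by simpa using hs)]
    rw [show (∫⁻ s : ℝ, E (z - c s)) = ∫⁻ s : ℝ,
        Set.indicator (Set.Iio (M z)) (fun s => ENNReal.ofReal (Real.exp (s - M z))) s from
      lintegral_congr fun s => congrFun hEeq s]
    rw [lintegral_indicator measurableSet_Iio _,
      setLIntegral_congr (Iio_ae_eq_Iic (a := M z))]
    have hInt : IntegrableOn (fun s => Real.exp (s - M z)) (Set.Iic (M z)) := by
      simp only [Real.exp_sub]
      exact (integrableOn_exp_Iic (M z)).div_const _
    rw [← ofReal_integral_eq_lintegral_ofReal hInt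
      (Filter.Eventually.of_forall fun s => (Real.exp_pos _).le)]
    have hval : ∫ s in Set.Iic (M z), Real.exp (s - M z) = 1 := by
      simp only [Real.exp_sub]
      rw [integral_div, integral_exp_Iic, div_self (Real.exp_ne_zero _)]
    rw [hval, ENNReal.ofReal_one]
  -- Step 2: the key Fubini computation
  set L : (Fin d → ℝ) → ℝ≥0∞ := fun z => ∫⁻ s, F (z + c s) with hL
  have hLmeas : Measurable L :=
    Measurable.lintegral_prod_right' (hFmeas.comp haddmeas)
  have hJ : ∫⁻ z, E z * L z = 1 := by
    have step1 : ∫⁻ z, E z * L z = ∫⁻ z, ∫⁻ s, E z * F (z + c s) := by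
      refine lintegral_congr fun z => ?_
      exact (lintegral_const_mul (E z) (hFmeas.comp (haddmeas.comp measurable_prodMk_left))).symm
    have huncurry1 : Measurable (Function.uncurry fun (z : Fin d → ℝ) (s : ℝ) => E z * F (z + c s)) :=
      (hEmeas.comp measurable_fst).mul (hFmeas.comp haddmeas)
    have step2 : ∫⁻ z, ∫⁻ s, E z * F (z + c s) = ∫⁻ s, ∫⁻ z, E z * F (z + c s) :=
      lintegral_lintegral_swap huncurry1.aemeasurable
    have step3 : ∀ s : ℝ, ∫⁻ z, E z * F (z + c s) = ∫⁻ z, E (z - c s) * F z := by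
      intro s
      have h := lintegral_add_right_eq_self (μ := (volume : Measure (Fin d → ℝ)))
        (fun w => E (w - c s) * F w) (c s)
      simpa using h
    have hsubmeas : Measurable (fun p : ℝ × (Fin d → ℝ) => p.2 - c p.1) := by
      refine measurable_pi_lambda _ fun j => ?_
      exact ((measurable_pi_apply j).comp measurable_snd).sub measurable_fst
    have huncurry2 : Measurable (Function.uncurry fun (s : ℝ) (z : Fin d → ℝ) => E (z - c s) * F z) :=
      (hEmeas.comp hsubmeas).mul (hFmeas.comp measurable_snd)
    have step4 : ∫⁻ s : ℝ, ∫⁻ z, E (z - c s) * F z = ∫⁻ z, ∫⁻ s : ℝ, E (z - c s) * F z :=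
      lintegral_lintegral_swap huncurry2.aemeasurable
    have step5 : ∀ z : Fin d → ℝ, ∫⁻ s : ℝ, E (z - c s) * F z = F z := by
      intro z
      have hm : Measurable fun s : ℝ => z - c s := by
        refine measurable_pi_lambda _ fun j => ?_
        exact measurable_const.sub measurable_id
      have hEm : Measurable fun s : ℝ => E (z - c s) := hEmeas.comp hm
      rw [lintegral_mul_const _ hEm, hexp1 z, one_mul]
    calc ∫⁻ z, E z * L z = ∫⁻ z, ∫⁻ s, E z * F (z + c s) := step1
      _ = ∫⁻ s, ∫⁻ z, E z * F (z + c s) := step2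
      _ = ∫⁻ s : ℝ, ∫⁻ z, E (z - c s) * F z := lintegral_congr step3
      _ = ∫⁻ z, ∫⁻ s : ℝ, E (z - c s) * F z := step4
      _ = ∫⁻ z, F z := lintegral_congr step5
      _ = 1 := hF1
  -- Step 3: identify the integrand with E z * L z almost everywhere
  set g : (Fin d → ℝ) → ℝ := fun z =>
    if 0 < M z then Real.exp (-M z) * ∫ s : ℝ, f (fun j => z j + s) else 0 with hg
  have hBmeas : StronglyMeasurable (fun z : Fin d → ℝ => ∫ s : ℝ, f (fun j => z j + s)) := by
    have h : StronglyMeasurable (fun p : (Fin d → ℝ) × ℝ => f (p.1 + c p.2)) :=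
      (hmeas.comp haddmeas).stronglyMeasurable
    exact h.integral_prod_right'
  have hgmeas : Measurable g :=
    Measurable.ite (measurableSet_lt measurable_const hMmeas)
      ((Real.measurable_exp.comp hMmeas.neg).mul hBmeas.measurable)
      measurable_const
  have hgnonneg : ∀ z, 0 ≤ g z := by
    intro z
    by_cases h0 : 0 < M z
    · have hgz : g z = Real.exp (-M z) * ∫ s : ℝ, f (fun j => z j + s) := by
        simp only [hg]; rw [if_pos h0]
      rw [hgz]
      exact mul_nonneg (Real.exp_pos _).le (integral_nonneg fun s => hnonneg _)
    · have hgz : g z = 0 := by simp only [hg]; rw [if_neg h0]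
      rw [hgz]
  have hae : ∀ᵐ z : Fin d → ℝ, ENNReal.ofReal (g z) = E z * L z := by
    have hlt : ∀ᵐ z : Fin d → ℝ, E z * L z < ⊤ := by
      refine ae_lt_top (hEmeas.mul hLmeas) ?_
      rw [hJ]; exact ENNReal.one_ne_top
    filter_upwards [hlt] with z hz
    by_cases h0 : 0 < M z
    · have hEz : E z = ENNReal.ofReal (Real.exp (-M z)) := by
        simp only [hE]; rw [if_pos h0]
      have hEz0 : E z ≠ 0 := by
        rw [hEz]; simp [Real.exp_pos]
      have hLlt : L z ≠ ⊤ := by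
        intro htop
        rw [htop, ENNReal.mul_top hEz0] at hz
        exact lt_irrefl _ hz
      have hgz : g z = Real.exp (-M z) * ∫ s : ℝ, f (fun j => z j + s) := by
        simp only [hg]; rw [if_pos h0]
      have hBeq : (∫ s : ℝ, f (fun j => z j + s)) = (L z).toReal := by
        exact integral_eq_lintegral_of_nonneg_ae (μ := (volume : Measure ℝ))
          (f := fun s => f (z + c s))
          (Filter.Eventually.of_forall fun s => hnonneg _)
          (hmeas.comp (haddmeas.comp measurable_prodMk_left)).aestronglyMeasurable
      rw [hgz, hBeq, ENNReal.ofReal_mul (Real.exp_pos _).le, ENNReal.ofReal_toReal hLlt, hEz]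
    · have hgz : g z = 0 := by simp only [hg]; rw [if_neg h0]
      have hEz : E z = 0 := by simp only [hE]; rw [if_neg h0]
      rw [hgz, hEz, zero_mul, ENNReal.ofReal_zero]
  -- Step 4: conclude
  have hfinal : ∫⁻ z, ENNReal.ofReal (g z) = 1 := by
    rw [lintegral_congr_ae hae, hJ]
  have h := integral_eq_lintegral_of_nonneg_ae (μ := (volume : Measure (Fin d → ℝ)))
    (Filter.Eventually.of_forall hgnonneg) hgmeas.aestronglyMeasurable
  rw [hfinal] at h
  have hgoal : ∫ z : Fin d → ℝ, g z = 1 := by rw [h]; simp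
  exact hgoal
end

section
/- Let (Ω, P) be a probability space, let E be an exponential random variable with rate 1, and let T = (T1, T2) be an R²-valued random vector independent of E. Define Z_j = E + T_j - max(T1,T2) for j = 1,2, let F_j(z) = P(Z_j ≤ z) be the cdf of Z_j, let F_j^{-1}(q) = inf{z ∈ R : F_j(z) ≥ q}, and let q* = inf{q ∈ (0,1) : F_1^{-1}(q) > 0 and F_2^{-1}(q) > 0}. Set V_j = exp(T_j - max(T1,T2)) / E[exp(T_j - max(T1,T2))]. Then for every q ∈ (q*, 1), P(Z_2 > F_2^{-1}(q)) > 0 and P(Z_1 > F_1^{-1}(q) | Z_2 > F_2^{-1}(q)) = E[min(V1, V2)]; in particular the limit χ_{1,2} = lim_{q→1⁻} P(Z_1 > F_1^{-1}(q) | Z_2 > F_2^{-1}(q)) exists and equals E[min(V1, V2)]. -/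
open MeasureTheory ProbabilityTheory

/-- The (right-continuous) distribution function of a real random variable `Z` under `P`. -/
noncomputable def distFun {Ω : Type*} [MeasurableSpace Ω]
    (P : Measure Ω) (Z : Ω → ℝ) (z : ℝ) : ℝ :=
  (P {ω | Z ω ≤ z}).toReal

/-- The generalized inverse (quantile function) `F⁻¹(q) = inf {z : F(z) ≥ q}`. -/
noncomputable def quantileFun {Ω : Type*} [MeasurableSpace Ω]
    (P : Measure Ω) (Z : Ω → ℝ) (q : ℝ) : ℝ :=
  sInf {z : ℝ | q ≤ distFun P Z z}

/-! Write `Zⱼ = E + Yⱼ` with `Yⱼ = Tⱼ - max (T₁, T₂) ≤ 0`. Since `E` is a standard exponential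
independent of `(Y₁, Y₂)`, conditioning on `(Y₁, Y₂)` gives `P(u₁ < Z₁, u₂ < Z₂) =
E[min (exp (Y₁ - u₁), exp (Y₂ - u₂))]` for `u₁ ≥ 0`, and in particular `Fⱼ(z) = 1 - cⱼ e^{-z}` on
`[0, ∞)` with `cⱼ = E[exp Yⱼ] ∈ (0, 1]`. So `Fⱼ⁻¹(q) = log (cⱼ / (1 - q))`, positive exactly when
`q > 1 - cⱼ`, whence `q* = max (1 - c₁, 1 - c₂)`. Above `q*` we have `exp (-Fⱼ⁻¹(q)) = (1 - q) / cⱼ`,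
so both `P(Z₂ > F₂⁻¹(q))` and the joint exceedance probability are exactly proportional to `1 - q`,
and their ratio is the constant `E[min (V₁, V₂)]`. -/

open Set Real

section

variable {Ω : Type*} [MeasurableSpace Ω] {P : Measure Ω}

lemma integrable_exp_of_le [IsFiniteMeasure P] {f : Ω → ℝ} (hf : Measurable f) {C : ℝ}
    (hC : ∀ ω, f ω ≤ C) : Integrable (fun ω => exp (f ω)) P :=
  .of_bound (by fun_prop) (exp C) <| ae_of_all _ fun ω => by
    rw [norm_of_nonneg (exp_pos _).le]
    exact exp_le_exp.mpr (hC ω)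

section Quantile

variable {Z : Ω → ℝ} {c q : ℝ}

lemma distFun_eq_one_sub [IsProbabilityMeasure P] (hZ : Measurable Z) (z : ℝ) :
    distFun P Z z = 1 - (P {ω | z < Z ω}).toReal := by
  have hcompl : {ω | Z ω ≤ z} = {ω | z < Z ω}ᶜ := by
    ext ω
    simp
  rw [distFun, hcompl, prob_compl_eq_one_sub (measurableSet_lt measurable_const hZ),
    ENNReal.toReal_sub_of_le prob_le_one ENNReal.one_ne_top, ENNReal.toReal_one]

lemma distFun_mono [IsFiniteMeasure P] : Monotone (distFun P Z) := fun _ _ hab =>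
  ENNReal.toReal_mono (measure_ne_top _ _) (measure_mono fun _ h => le_trans h hab)

lemma quantileFun_eq_log [IsFiniteMeasure P]
    (hF : ∀ z, 0 ≤ z → distFun P Z z = 1 - c * exp (-z)) (hc : 0 < c) (hcq : 1 - c < q)
    (hq : q < 1) : quantileFun P Z q = log (c / (1 - q)) := by
  set r := log (c / (1 - q))
  have hr : 0 < r := log_pos <| (one_lt_div (by linarith)).mpr (by linarith)
  have hFr : distFun P Z r = q := by
    rw [hF r hr.le, exp_neg, exp_log (by apply div_pos <;> linarith)]
    field_simp
    ring
  refine IsLeast.csInf_eq ⟨hFr.ge, fun z (hz : q ≤ distFun P Z z) => ?_⟩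
  by_contra! hzr
  have hFz : distFun P Z z < q := by
    rcases lt_or_ge z 0 with hz0 | hz0
    · calc distFun P Z z ≤ distFun P Z 0 := distFun_mono hz0.le
        _ = 1 - c := by simp [hF 0 le_rfl]
        _ < q := hcq
    · rw [← hFr, hF z hz0, hF r hr.le]
      gcongr
  exact hFz.not_ge hz

lemma quantileFun_nonpos (hF : ∀ z, 0 ≤ z → distFun P Z z = 1 - c * exp (-z))
    (hcq : q ≤ 1 - c) : quantileFun P Z q ≤ 0 := by
  have h0 : (0 : ℝ) ∈ {z | q ≤ distFun P Z z} := by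
    simpa [hF 0 le_rfl] using hcq
  -- an unbounded-below set of reals has `sInf = 0`, which is also `≤ 0`
  by_cases hb : BddBelow {z | q ≤ distFun P Z z}
  · exact csInf_le hb h0
  · rw [quantileFun, Real.sInf_of_not_bddBelow hb]

lemma quantileFun_pos_iff [IsFiniteMeasure P]
    (hF : ∀ z, 0 ≤ z → distFun P Z z = 1 - c * exp (-z)) (hc : 0 < c) (hq : q < 1) :
    0 < quantileFun P Z q ↔ 1 - c < q := by
  refine ⟨fun h => ?_, fun hcq => ?_⟩
  · by_contra! hcq
    exact (quantileFun_nonpos hF hcq).not_gt h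
  · rw [quantileFun_eq_log hF hc hcq hq]
    exact log_pos <| (one_lt_div (by linarith)).mpr (by linarith)

lemma mul_exp_neg_quantileFun [IsFiniteMeasure P]
    (hF : ∀ z, 0 ≤ z → distFun P Z z = 1 - c * exp (-z)) (hc : 0 < c) (hcq : 1 - c < q)
    (hq : q < 1) : c * exp (-quantileFun P Z q) = 1 - q := by
  rw [quantileFun_eq_log hF hc hcq hq, exp_neg, exp_log (by apply div_pos <;> linarith)]
  field_simp

lemma measure_quantileFun_lt [IsProbabilityMeasure P] (hZ : Measurable Z)
    (hF : ∀ z, 0 ≤ z → distFun P Z z = 1 - c * exp (-z)) (hc : 0 < c) (hcq : 1 - c < q)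
    (hq : q < 1) : P {ω | quantileFun P Z q < Z ω} = ENNReal.ofReal (1 - q) := by
  have h := distFun_eq_one_sub (P := P) hZ (quantileFun P Z q)
  rw [hF _ ((quantileFun_pos_iff hF hc hq).2 hcq).le, mul_exp_neg_quantileFun hF hc hcq hq] at h
  rw [← ENNReal.ofReal_toReal (measure_ne_top P _)]
  congr 1
  linarith

lemma le_one_of_distFun_eq (hF : ∀ z, 0 ≤ z → distFun P Z z = 1 - c * exp (-z)) : c ≤ 1 := by
  have h : 0 ≤ distFun P Z 0 := ENNReal.toReal_nonneg
  rw [hF 0 le_rfl, neg_zero, exp_zero, mul_one] at h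
  linarith

lemma sInf_quantileFun_pos [IsFiniteMeasure P] {Z₁ Z₂ : Ω → ℝ} {c₁ c₂ : ℝ}
    (hF₁ : ∀ z, 0 ≤ z → distFun P Z₁ z = 1 - c₁ * exp (-z)) (hc₁ : 0 < c₁)
    (hF₂ : ∀ z, 0 ≤ z → distFun P Z₂ z = 1 - c₂ * exp (-z)) (hc₂ : 0 < c₂) :
    sInf {q : ℝ | q ∈ Ioo (0 : ℝ) 1 ∧ 0 < quantileFun P Z₁ q ∧ 0 < quantileFun P Z₂ q}
      = max (1 - c₁) (1 - c₂) := by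
  have h₁ := le_one_of_distFun_eq hF₁
  have h₂ := le_one_of_distFun_eq hF₂
  have hS : {q : ℝ | q ∈ Ioo (0 : ℝ) 1 ∧ 0 < quantileFun P Z₁ q ∧ 0 < quantileFun P Z₂ q}
      = Ioo (max (1 - c₁) (1 - c₂)) 1 := by
    ext q
    refine ⟨fun ⟨⟨_, hq⟩, hpos₁, hpos₂⟩ => ⟨?_, hq⟩, fun ⟨hmax, hq⟩ => ?_⟩
    · exact max_lt ((quantileFun_pos_iff hF₁ hc₁ hq).1 hpos₁)
        ((quantileFun_pos_iff hF₂ hc₂ hq).1 hpos₂)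
    · rw [max_lt_iff] at hmax
      exact ⟨⟨by linarith, hq⟩, (quantileFun_pos_iff hF₁ hc₁ hq).2 hmax.1,
        (quantileFun_pos_iff hF₂ hc₂ hq).2 hmax.2⟩
  rw [hS, csInf_Ioo (max_lt (by linarith) (by linarith))]

end Quantile

section ExponentialShift

variable [IsProbabilityMeasure P] {E : Ω → ℝ}

lemma measure_lt_eq_integral_exp_neg {β : Type*} [MeasurableSpace β] {W : Ω → β}
    (hE : Measurable E) (hW : Measurable W)
    (hExp : ∀ x : ℝ, 0 ≤ x → P {ω | x < E ω} = ENNReal.ofReal (exp (-x)))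
    (hIndep : IndepFun E W P) {g : β → ℝ} (hg : Measurable g) (hg0 : ∀ ω, 0 ≤ g (W ω)) :
    P {ω | g (W ω) < E ω} = ENNReal.ofReal (∫ ω, exp (-g (W ω)) ∂P) := by
  have hS : MeasurableSet {p : β × ℝ | g p.1 < p.2} :=
    measurableSet_lt (hg.comp measurable_fst) measurable_snd
  have hsection (ω : Ω) :
      P.map E (Prod.mk (W ω) ⁻¹' {p | g p.1 < p.2}) = ENNReal.ofReal (exp (-g (W ω))) := by
    change P.map E (Ioi (g (W ω))) = _
    rw [Measure.map_apply hE measurableSet_Ioi]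
    exact hExp _ (hg0 ω)
  have hint : Integrable (fun ω => exp (-g (W ω))) P :=
    integrable_exp_of_le (by fun_prop) fun ω => neg_nonpos.mpr (hg0 ω)
  calc P {ω | g (W ω) < E ω} = P.map (fun ω => (W ω, E ω)) {p | g p.1 < p.2} :=
        (Measure.map_apply (hW.prodMk hE) hS).symm
    _ = ∫⁻ ω, P.map E (Prod.mk (W ω) ⁻¹' {p | g p.1 < p.2}) ∂P := by
        rw [(indepFun_iff_map_prod_eq_prod_map_map hW.aemeasurable hE.aemeasurable).mp
          hIndep.symm, Measure.prod_apply hS, lintegral_map (measurable_measure_prodMk_left hS) hW]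
    _ = ∫⁻ ω, ENNReal.ofReal (exp (-g (W ω))) ∂P := lintegral_congr hsection
    _ = ENNReal.ofReal (∫ ω, exp (-g (W ω)) ∂P) :=
        (ofReal_integral_eq_lintegral_ofReal hint (ae_of_all _ fun _ => (exp_pos _).le)).symm

lemma distFun_add_of_nonpos {Y : Ω → ℝ} (hE : Measurable E)
    (hExp : ∀ x : ℝ, 0 ≤ x → P {ω | x < E ω} = ENNReal.ofReal (exp (-x)))
    (hY : Measurable Y) (hIndep : IndepFun E Y P) (hY0 : ∀ ω, Y ω ≤ 0) {z : ℝ} (hz : 0 ≤ z) :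
    distFun P (fun ω => E ω + Y ω) z = 1 - (∫ ω, exp (Y ω) ∂P) * exp (-z) := by
  have hset : {ω | z < E ω + Y ω} = {ω | z - Y ω < E ω} := by
    simp only [sub_lt_iff_lt_add]
  have h := measure_lt_eq_integral_exp_neg hE hY hExp hIndep (g := fun y => z - y)
    (by fun_prop) fun ω => by linarith [hY0 ω]
  rw [distFun_eq_one_sub (by fun_prop), hset, h, ENNReal.toReal_ofReal (by positivity),
    ← integral_mul_const]
  simp only [neg_sub, exp_sub, div_eq_mul_inv, exp_neg]

lemma measure_inter_lt_add_of_nonpos {Y₁ Y₂ : Ω → ℝ} (hE : Measurable E)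
    (hExp : ∀ x : ℝ, 0 ≤ x → P {ω | x < E ω} = ENNReal.ofReal (exp (-x)))
    (hY₁ : Measurable Y₁) (hY₂ : Measurable Y₂) (hIndep : IndepFun E (fun ω => (Y₁ ω, Y₂ ω)) P)
    (hY₁0 : ∀ ω, Y₁ ω ≤ 0) {u₁ : ℝ} (hu₁ : 0 ≤ u₁) (u₂ : ℝ) :
    P ({ω | u₁ < E ω + Y₁ ω} ∩ {ω | u₂ < E ω + Y₂ ω})
      = ENNReal.ofReal (∫ ω, min (exp (Y₁ ω - u₁)) (exp (Y₂ ω - u₂)) ∂P) := by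
  have hset : {ω | u₁ < E ω + Y₁ ω} ∩ {ω | u₂ < E ω + Y₂ ω}
      = {ω | max (u₁ - Y₁ ω) (u₂ - Y₂ ω) < E ω} := by
    ext ω
    simp only [mem_inter_iff, mem_ofPred_eq, max_lt_iff, sub_lt_iff_lt_add]
  have h := measure_lt_eq_integral_exp_neg hE (hY₁.prodMk hY₂) hExp hIndep
    (g := fun y => max (u₁ - y.1) (u₂ - y.2)) (by fun_prop)
    fun ω => le_max_of_le_left (by linarith [hY₁0 ω])
  rw [hset, h]
  simp only [← min_neg_neg, exp_monotone.map_min, neg_sub]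

lemma cond_quantileFun_lt_add_of_nonpos {Y₁ Y₂ : Ω → ℝ} (hE : Measurable E)
    (hExp : ∀ x : ℝ, 0 ≤ x → P {ω | x < E ω} = ENNReal.ofReal (exp (-x)))
    (hY₁ : Measurable Y₁) (hY₂ : Measurable Y₂) (hIndep : IndepFun E (fun ω => (Y₁ ω, Y₂ ω)) P)
    (hY₁0 : ∀ ω, Y₁ ω ≤ 0) (hY₂0 : ∀ ω, Y₂ ω ≤ 0) {q : ℝ}
    (hq : q ∈ Ioo (max (1 - ∫ ω, exp (Y₁ ω) ∂P) (1 - ∫ ω, exp (Y₂ ω) ∂P)) 1) :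
    0 < P {ω | quantileFun P (fun ω => E ω + Y₂ ω) q < E ω + Y₂ ω} ∧
      cond P {ω | quantileFun P (fun ω => E ω + Y₂ ω) q < E ω + Y₂ ω}
          {ω | quantileFun P (fun ω => E ω + Y₁ ω) q < E ω + Y₁ ω}
        = ENNReal.ofReal (∫ ω, min (exp (Y₁ ω) / ∫ ω', exp (Y₁ ω') ∂P)
            (exp (Y₂ ω) / ∫ ω', exp (Y₂ ω') ∂P) ∂P) := by
  set c₁ := ∫ ω, exp (Y₁ ω) ∂P
  set c₂ := ∫ ω, exp (Y₂ ω) ∂P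
  set Q₁ := quantileFun P (fun ω => E ω + Y₁ ω) q
  set Q₂ := quantileFun P (fun ω => E ω + Y₂ ω) q
  obtain ⟨hmax, hq1⟩ := hq
  rw [max_lt_iff] at hmax
  have hc₁ : 0 < c₁ := integral_exp_pos (integrable_exp_of_le hY₁ hY₁0)
  have hc₂ : 0 < c₂ := integral_exp_pos (integrable_exp_of_le hY₂ hY₂0)
  have hF₁ (z : ℝ) (hz : 0 ≤ z) := distFun_add_of_nonpos hE hExp hY₁
    (hIndep.comp measurable_id measurable_fst) hY₁0 hz
  have hF₂ (z : ℝ) (hz : 0 ≤ z) := distFun_add_of_nonpos hE hExp hY₂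
    (hIndep.comp measurable_id measurable_snd) hY₂0 hz
  have hQ₁ : c₁ * exp (-Q₁) = 1 - q := mul_exp_neg_quantileFun hF₁ hc₁ hmax.1 hq1
  have hQ₂ : c₂ * exp (-Q₂) = 1 - q := mul_exp_neg_quantileFun hF₂ hc₂ hmax.2 hq1
  have hQ₁0 : 0 ≤ Q₁ := ((quantileFun_pos_iff hF₁ hc₁ hq1).2 hmax.1).le
  have hq0 : 0 < 1 - q := by linarith
  have htail : P {ω | Q₂ < E ω + Y₂ ω} = ENNReal.ofReal (1 - q) :=
    measure_quantileFun_lt (by fun_prop) hF₂ hc₂ hmax.2 hq1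
  have hjoint : P ({ω | Q₂ < E ω + Y₂ ω} ∩ {ω | Q₁ < E ω + Y₁ ω})
      = ENNReal.ofReal ((1 - q) * ∫ ω, min (exp (Y₁ ω) / c₁) (exp (Y₂ ω) / c₂) ∂P) := by
    rw [inter_comm, measure_inter_lt_add_of_nonpos hE hExp hY₁ hY₂ hIndep hY₁0 hQ₁0,
      ← integral_const_mul]
    congr 1
    refine integral_congr_ae (ae_of_all _ fun ω => ?_)
    beta_reduce
    rw [mul_min_of_nonneg _ _ hq0.le]
    congr 1
    · rw [← hQ₁, sub_eq_add_neg, exp_add]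
      field_simp
    · rw [← hQ₂, sub_eq_add_neg, exp_add]
      field_simp
  refine ⟨htail ▸ ENNReal.ofReal_pos.2 hq0, ?_⟩
  rw [cond_apply (measurableSet_lt measurable_const (by fun_prop)), hjoint, htail,
    ENNReal.ofReal_mul hq0.le, ← mul_assoc,
    ENNReal.inv_mul_cancel (ENNReal.ofReal_pos.2 hq0).ne' ENNReal.ofReal_ne_top, one_mul]

end ExponentialShift

end

theorem bivariate_tail_dependence_coefficient
    {Ω : Type*} [MeasurableSpace Ω] (P : Measure Ω) [IsProbabilityMeasure P]
    (E T1 T2 : Ω → ℝ) (hE : Measurable E) (hT1 : Measurable T1) (hT2 : Measurable T2)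
    (hExp : ∀ x : ℝ, 0 ≤ x → P {ω | x < E ω} = ENNReal.ofReal (Real.exp (-x)))
    (hIndep : IndepFun E (fun ω => (T1 ω, T2 ω)) P)
    (Z1 Z2 : Ω → ℝ)
    (hZ1 : Z1 = fun ω => E ω + T1 ω - max (T1 ω) (T2 ω))
    (hZ2 : Z2 = fun ω => E ω + T2 ω - max (T1 ω) (T2 ω))
    (V1 V2 : Ω → ℝ)
    (hV1 : V1 = fun ω => Real.exp (T1 ω - max (T1 ω) (T2 ω)) /
      ∫ ω', Real.exp (T1 ω' - max (T1 ω') (T2 ω')) ∂P)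
    (hV2 : V2 = fun ω => Real.exp (T2 ω - max (T1 ω) (T2 ω)) /
      ∫ ω', Real.exp (T2 ω' - max (T1 ω') (T2 ω')) ∂P)
    (qstar : ℝ)
    (hqstar : qstar = sInf {q : ℝ | q ∈ Set.Ioo (0 : ℝ) 1 ∧
      0 < quantileFun P Z1 q ∧ 0 < quantileFun P Z2 q}) :
    (∀ q ∈ Set.Ioo qstar 1,
      0 < P {ω | quantileFun P Z2 q < Z2 ω} ∧
      (ProbabilityTheory.cond P {ω | quantileFun P Z2 q < Z2 ω})
          {ω | quantileFun P Z1 q < Z1 ω}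
        = ENNReal.ofReal (∫ ω, min (V1 ω) (V2 ω) ∂P)) ∧
    Filter.Tendsto
      (fun q => ((ProbabilityTheory.cond P {ω | quantileFun P Z2 q < Z2 ω})
          {ω | quantileFun P Z1 q < Z1 ω}).toReal)
      (nhdsWithin 1 (Set.Iio 1))
      (nhds (∫ ω, min (V1 ω) (V2 ω) ∂P)) := by
  set Y₁ : Ω → ℝ := fun ω => T1 ω - max (T1 ω) (T2 ω)
  set Y₂ : Ω → ℝ := fun ω => T2 ω - max (T1 ω) (T2 ω)
  have hY₁ : Measurable Y₁ := by fun_prop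
  have hY₂ : Measurable Y₂ := by fun_prop
  have hY₁0 (ω : Ω) : Y₁ ω ≤ 0 := sub_nonpos.mpr (le_max_left _ _)
  have hY₂0 (ω : Ω) : Y₂ ω ≤ 0 := sub_nonpos.mpr (le_max_right _ _)
  have hIndepY : IndepFun E (fun ω => (Y₁ ω, Y₂ ω)) P :=
    hIndep.comp (ψ := fun p : ℝ × ℝ => (p.1 - max p.1 p.2, p.2 - max p.1 p.2)) measurable_id
      (by fun_prop)
  obtain rfl : Z1 = fun ω => E ω + Y₁ ω := by simp only [hZ1, Y₁, add_sub_assoc]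
  obtain rfl : Z2 = fun ω => E ω + Y₂ ω := by simp only [hZ2, Y₂, add_sub_assoc]
  have hc₁ : 0 < ∫ ω, exp (Y₁ ω) ∂P := integral_exp_pos (integrable_exp_of_le hY₁ hY₁0)
  have hc₂ : 0 < ∫ ω, exp (Y₂ ω) ∂P := integral_exp_pos (integrable_exp_of_le hY₂ hY₂0)
  rw [sInf_quantileFun_pos
    (fun z => distFun_add_of_nonpos hE hExp hY₁ (hIndepY.comp measurable_id measurable_fst) hY₁0)
    hc₁
    (fun z => distFun_add_of_nonpos hE hExp hY₂ (hIndepY.comp measurable_id measurable_snd) hY₂0)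
    hc₂] at hqstar
  subst hqstar hV1 hV2
  have hcond (q : ℝ) (hq : q ∈ Ioo _ 1) :=
    cond_quantileFun_lt_add_of_nonpos hE hExp hY₁ hY₂ hIndepY hY₁0 hY₂0 hq
  refine ⟨hcond, tendsto_const_nhds.congr' ?_⟩
  filter_upwards [Ioo_mem_nhdsLT (max_lt (sub_lt_self 1 hc₁) (sub_lt_self 1 hc₂))] with q hq
  rw [(hcond q hq).2, ENNReal.toReal_ofReal (integral_nonneg fun ω => by positivity)]
end

section
/- Let (Ω, P) be a probability space, d ≥ 2, let E be an exponential random variable with rate 1, and let T = (T_1,…,T_d) be an R^d-valued random vector independent of E. Define Z_j = E + T_j - max_i T_i, let F_j(z) = P(Z_j ≤ z), let F_j^{-1}(q) = inf{z ∈ R : F_j(z) ≥ q}, and let q* = inf{q ∈ (0,1) : F_j^{-1}(q) > 0 for all j = 1,…,d}. Set V_j = exp(T_j - max_i T_i) / E[exp(T_j - max_i T_i)]. Then for every q ∈ (q*, 1), P(Z_j > F_j^{-1}(q) for all j = 1,…,d) / (1 - q) = E[min_j V_j]; in particular χ_{1:d} = lim_{q→1⁻} P(Z_j > F_j^{-1}(q)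 for all j)/(1-q) exists and equals E[min_j V_j]. -/
open MeasureTheory ProbabilityTheory

private lemma tail_formula {Ω : Type*} [MeasurableSpace Ω] (P : Measure Ω) [IsProbabilityMeasure P]
    {d : ℕ} {E : Ω → ℝ} {T : Ω → Fin d → ℝ}
    (hE : Measurable E) (hT : Measurable T)
    (hExp : ∀ x : ℝ, 0 ≤ x → P {ω | x < E ω} = ENNReal.ofReal (Real.exp (-x)))
    (hIndep : IndepFun E T P)
    (g : (Fin d → ℝ) → ℝ) (hg : Measurable g) (hg0 : ∀ t, 0 ≤ g t) :
    P {ω | g (T ω) < E ω} = ENNReal.ofReal (∫ ω, Real.exp (-(g (T ω))) ∂P) := by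
  have hmap : P.map (fun ω => (T ω, E ω)) = (P.map T).prod (P.map E) :=
    (indepFun_iff_map_prod_eq_prod_map_map hT.aemeasurable hE.aemeasurable).mp hIndep.symm
  have hS : MeasurableSet {p : (Fin d → ℝ) × ℝ | g p.1 < p.2} :=
    measurableSet_lt (hg.comp measurable_fst) measurable_snd
  have h1 : P {ω | g (T ω) < E ω}
      = (P.map T).prod (P.map E) {p : (Fin d → ℝ) × ℝ | g p.1 < p.2} := by
    rw [← hmap, Measure.map_apply (hT.prodMk hE) hS]
    rfl
  rw [h1, Measure.prod_apply hS]
  have h2 : ∀ t : Fin d → ℝ,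
      (P.map E) (Prod.mk t ⁻¹' {p : (Fin d → ℝ) × ℝ | g p.1 < p.2})
      = ENNReal.ofReal (Real.exp (-(g t))) := by
    intro t
    have hset : Prod.mk t ⁻¹' {p : (Fin d → ℝ) × ℝ | g p.1 < p.2} = Set.Ioi (g t) := rfl
    rw [hset, Measure.map_apply hE measurableSet_Ioi, ← hExp (g t) (hg0 t)]
    rfl
  simp_rw [h2]
  have hint : Integrable (fun ω => Real.exp (-(g (T ω)))) P := by
    refine (integrable_const (1 : ℝ)).mono' ?_ ?_
    · exact (Real.measurable_exp.comp ((hg.comp hT).neg)).aestronglyMeasurable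
    · filter_upwards with ω
      rw [Real.norm_eq_abs, abs_of_pos (Real.exp_pos _)]
      calc Real.exp (-(g (T ω))) ≤ Real.exp 0 :=
            Real.exp_le_exp.mpr (neg_nonpos.mpr (hg0 _))
        _ = 1 := Real.exp_zero
  rw [lintegral_map (by measurability) hT,
    ← ofReal_integral_eq_lintegral_ofReal hint
      (Filter.Eventually.of_forall fun ω => (Real.exp_pos _).le)]

private lemma neg_sup'_real {ι : Type*} {s : Finset ι} (H : s.Nonempty) (f : ι → ℝ) :
    -(s.sup' H f) = s.inf' H (fun i => -(f i)) := by
  apply le_antisymm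
  · rw [Finset.le_inf'_iff]
    intro i hi
    exact neg_le_neg (Finset.le_sup' f hi)
  · obtain ⟨i, hi, hval⟩ := Finset.exists_mem_eq_sup' H f
    rw [hval]
    exact Finset.inf'_le _ hi

private lemma exp_inf'_real {ι : Type*} {s : Finset ι} (H : s.Nonempty) (f : ι → ℝ) :
    Real.exp (s.inf' H f) = s.inf' H (fun i => Real.exp (f i)) :=
  Finset.apply_inf'_eq_inf'_comp H Real.exp fun _ _ => Real.exp_monotone.map_min

private lemma mul_inf'_real {ι : Type*} {s : Finset ι} (H : s.Nonempty) (f : ι → ℝ) {a : ℝ}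
    (ha : 0 ≤ a) : a * s.inf' H f = s.inf' H (fun i => a * f i) :=
  Finset.apply_inf'_eq_inf'_comp H (fun x => a * x) fun _ _ =>
    (monotone_mul_left_of_nonneg ha).map_min

theorem joint_exceedance_coefficient_chi
    {Ω : Type*} [MeasurableSpace Ω] (P : Measure Ω) [IsProbabilityMeasure P]
    (d : ℕ) (hd : 2 ≤ d)
    (E : Ω → ℝ) (T : Ω → Fin d → ℝ) (hE : Measurable E) (hT : Measurable T)
    (hExp : ∀ x : ℝ, 0 ≤ x → P {ω | x < E ω} = ENNReal.ofReal (Real.exp (-x)))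
    (hIndep : IndepFun E T P)
    (Z : Fin d → Ω → ℝ)
    (hZ : Z = fun j ω => E ω + T ω j -
      Finset.univ.sup' ⟨⟨0, by omega⟩, Finset.mem_univ _⟩ (T ω))
    (V : Fin d → Ω → ℝ)
    (hV : V = fun j ω =>
      Real.exp (T ω j - Finset.univ.sup' ⟨⟨0, by omega⟩, Finset.mem_univ _⟩ (T ω)) /
        ∫ ω', Real.exp (T ω' j -
          Finset.univ.sup' ⟨⟨0, by omega⟩, Finset.mem_univ _⟩ (T ω')) ∂P)
    (qstar : ℝ)
    (hqstar : qstar = sInf {q : ℝ | q ∈ Set.Ioo (0 : ℝ) 1 ∧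
      ∀ j, 0 < quantileFun P (Z j) q}) :
    (∀ q ∈ Set.Ioo qstar 1,
      (P {ω | ∀ j, quantileFun P (Z j) q < Z j ω}).toReal / (1 - q)
        = ∫ ω, Finset.univ.inf' ⟨⟨0, by omega⟩, Finset.mem_univ _⟩ (fun j => V j ω) ∂P) ∧
    Filter.Tendsto
      (fun q => (P {ω | ∀ j, quantileFun P (Z j) q < Z j ω}).toReal / (1 - q))
      (nhdsWithin 1 (Set.Iio 1))
      (nhds (∫ ω, Finset.univ.inf' ⟨⟨0, by omega⟩, Finset.mem_univ _⟩ (fun j => V j ω) ∂P)) := by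
  have hne : (Finset.univ : Finset (Fin d)).Nonempty := ⟨⟨0, by omega⟩, Finset.mem_univ _⟩
  have hMmeas : Measurable (fun t : Fin d → ℝ => Finset.univ.sup' hne t) := by
    have h := Finset.measurable_sup' hne (f := fun i (t : Fin d → ℝ) => t i)
      (fun i _ => measurable_pi_apply i)
    have heq : (Finset.univ.sup' hne fun i (t : Fin d → ℝ) => t i)
        = fun t : Fin d → ℝ => Finset.univ.sup' hne t := by
      funext t
      rw [Finset.sup'_apply]
    rwa [heq] at h
  have hZ' : ∀ j ω, Z j ω = E ω + T ω j - Finset.univ.sup' hne (T ω) := by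
    rw [hZ]; intro j ω; rfl
  set c : Fin d → ℝ := fun j => ∫ ω, Real.exp (T ω j - Finset.univ.sup' hne (T ω)) ∂P
    with hcdef
  have hV' : ∀ j ω, V j ω = Real.exp (T ω j - Finset.univ.sup' hne (T ω)) / c j := by
    rw [hV]; intro j ω; rfl
  have hWle : ∀ (j : Fin d) (t : Fin d → ℝ), t j - Finset.univ.sup' hne t ≤ 0 := fun j t =>
    sub_nonpos.mpr (Finset.le_sup' _ (Finset.mem_univ j))
  have hWmeas : ∀ j : Fin d, Measurable (fun t : Fin d → ℝ => t j - Finset.univ.sup' hne t) :=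
    fun j => (measurable_pi_apply j).sub hMmeas
  have hZmeas : ∀ j, Measurable (Z j) := by
    intro j
    have hfun : Z j = fun ω => E ω + T ω j - Finset.univ.sup' hne (T ω) := funext (hZ' j)
    rw [hfun]
    exact (hE.add ((measurable_pi_apply j).comp hT)).sub (hMmeas.comp hT)
  have hcint : ∀ j, Integrable (fun ω => Real.exp (T ω j - Finset.univ.sup' hne (T ω))) P := by
    intro j
    refine (integrable_const (1 : ℝ)).mono' ?_ ?_
    · exact (Real.measurable_exp.comp ((hWmeas j).comp hT)).aestronglyMeasurable
    · filter_upwards with ω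
      rw [Real.norm_eq_abs, abs_of_pos (Real.exp_pos _)]
      calc Real.exp (T ω j - Finset.univ.sup' hne (T ω)) ≤ Real.exp 0 :=
            Real.exp_le_exp.mpr (hWle j (T ω))
        _ = 1 := Real.exp_zero
  have hcpos : ∀ j, 0 < c j := by
    intro j
    simp only [hcdef]
    refine (integral_pos_iff_support_of_nonneg (fun ω => (Real.exp_pos _).le) (hcint j)).mpr ?_
    have hsupp : (Function.support fun ω => Real.exp (T ω j - Finset.univ.sup' hne (T ω)))
        = Set.univ := by
      ext ω; simp [Function.mem_support, (Real.exp_pos _).ne']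
    rw [hsupp]
    simp
  have hcle1 : ∀ j, c j ≤ 1 := by
    intro j
    simp only [hcdef]
    calc ∫ ω, Real.exp (T ω j - Finset.univ.sup' hne (T ω)) ∂P ≤ ∫ _ω, (1 : ℝ) ∂P := by
          refine integral_mono (hcint j) (integrable_const 1) fun ω => ?_
          calc Real.exp (T ω j - Finset.univ.sup' hne (T ω)) ≤ Real.exp 0 :=
                Real.exp_le_exp.mpr (hWle j (T ω))
            _ = 1 := Real.exp_zero
      _ = 1 := by simp
  have hTail : ∀ (j : Fin d) (z : ℝ), 0 ≤ z →
      P {ω | z < Z j ω} = ENNReal.ofReal (Real.exp (-z) * c j) := by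
    intro j z hz
    have hg : Measurable (fun t : Fin d → ℝ => z - (t j - Finset.univ.sup' hne t)) :=
      measurable_const.sub (hWmeas j)
    have hg0 : ∀ t, 0 ≤ z - (t j - Finset.univ.sup' hne t) := fun t =>
      sub_nonneg.mpr (le_trans (hWle j t) hz)
    have ht := tail_formula P hE hT hExp hIndep _ hg hg0
    have hset : {ω | z < Z j ω}
        = {ω | (fun t : Fin d → ℝ => z - (t j - Finset.univ.sup' hne t)) (T ω) < E ω} := by
      ext ω
      simp only [Set.mem_setOf_eq, hZ' j ω]
      constructor <;> intro h <;> linarith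
    rw [hset, ht]
    congr 1
    simp only [hcdef]
    rw [← integral_const_mul]
    refine integral_congr_ae (Filter.Eventually.of_forall fun ω => ?_)
    show Real.exp (-(z - (T ω j - Finset.univ.sup' hne (T ω))))
      = Real.exp (-z) * Real.exp (T ω j - Finset.univ.sup' hne (T ω))
    rw [← Real.exp_add]
    congr 1
    ring
  have hF : ∀ (j : Fin d) (z : ℝ), 0 ≤ z →
      distFun P (Z j) z = 1 - Real.exp (-z) * c j := by
    intro j z hz
    have hcompl : {ω | Z j ω ≤ z} = {ω | z < Z j ω}ᶜ := by
      ext ω; simp [not_lt]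
    have hms : MeasurableSet {ω | z < Z j ω} := measurableSet_lt measurable_const (hZmeas j)
    have hexpz : Real.exp (-z) ≤ 1 := by
      calc Real.exp (-z) ≤ Real.exp 0 := Real.exp_le_exp.mpr (by linarith)
        _ = 1 := Real.exp_zero
    have hle1 : Real.exp (-z) * c j ≤ 1 := by
      calc Real.exp (-z) * c j ≤ 1 * 1 :=
            mul_le_mul hexpz (hcle1 j) (hcpos j).le zero_le_one
        _ = 1 := one_mul 1
    have hnn : 0 ≤ Real.exp (-z) * c j := mul_nonneg (Real.exp_pos _).le (hcpos j).le
    rw [distFun, hcompl, prob_compl_eq_one_sub hms, hTail j z hz,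
      ← ENNReal.ofReal_one, ← ENNReal.ofReal_sub _ hnn,
      ENNReal.toReal_ofReal (by linarith)]
  have hFmono : ∀ j, Monotone (distFun P (Z j)) := by
    intro j a b hab
    exact ENNReal.toReal_mono (measure_ne_top P _)
      (measure_mono fun ω h => le_trans h hab)
  have hquant : ∀ (j : Fin d) (q : ℝ), 1 - c j < q → q < 1 →
      quantileFun P (Z j) q = Real.log (c j / (1 - q)) := by
    intro j q hq1 hq2
    have h1q : 0 < 1 - q := by linarith
    have hLpos : 0 < Real.log (c j / (1 - q)) :=
      Real.log_pos ((one_lt_div h1q).mpr (by linarith))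
    have key : ∀ z : ℝ, (Real.exp (-z) * c j ≤ 1 - q) ↔ (Real.log (c j / (1 - q)) ≤ z) := by
      intro z
      rw [← le_div_iff₀ (hcpos j), ← Real.le_log_iff_exp_le (div_pos h1q (hcpos j)),
        ← inv_div (c j) (1 - q), Real.log_inv]
      constructor <;> intro <;> linarith
    have hsetq : {z : ℝ | q ≤ distFun P (Z j) z} = Set.Ici (Real.log (c j / (1 - q))) := by
      ext z
      simp only [Set.mem_setOf_eq, Set.mem_Ici]
      constructor
      · intro h
        by_contra hlt
        push_neg at hlt
        rcases le_or_gt 0 z with hz | hz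
        · rw [hF j z hz] at h
          have h2 : ¬(Real.exp (-z) * c j ≤ 1 - q) := fun hh => hlt.not_ge ((key z).mp hh)
          push_neg at h2
          linarith
        · have hmon : distFun P (Z j) z ≤ distFun P (Z j) 0 := hFmono j hz.le
          rw [hF j 0 le_rfl, neg_zero, Real.exp_zero, one_mul] at hmon
          linarith
      · intro h
        have hz : 0 ≤ z := le_trans hLpos.le h
        rw [hF j z hz]
        have h2 := (key z).mpr h
        linarith
    rw [quantileFun, hsetq, csInf_Ici]
  have hquant0 : ∀ (j : Fin d) (q : ℝ), 0 < q → q ≤ 1 - c j →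
      quantileFun P (Z j) q ≤ 0 := by
    intro j q hq0 hqc
    have hmem : (0 : ℝ) ∈ {z : ℝ | q ≤ distFun P (Z j) z} := by
      simp only [Set.mem_setOf_eq]
      rw [hF j 0 le_rfl, neg_zero, Real.exp_zero, one_mul]
      exact hqc
    obtain ⟨n, hn⟩ : ∃ n : ℕ, distFun P (Z j) (-(n : ℝ)) < q := by
      have hanti : Antitone fun n : ℕ => {ω | Z j ω ≤ -(n : ℝ)} := by
        intro a b hab ω hω
        simp only [Set.mem_setOf_eq] at hω ⊢
        refine le_trans hω ?_
        simp only [neg_le_neg_iff]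
        exact_mod_cast hab
      have hiempty : ⋂ n : ℕ, {ω | Z j ω ≤ -(n : ℝ)} = ∅ := by
        ext ω
        simp only [Set.mem_iInter, Set.mem_setOf_eq, Set.mem_empty_iff_false, iff_false,
          not_forall, not_le]
        obtain ⟨n, hn⟩ := exists_nat_gt (-(Z j ω))
        exact ⟨n, by linarith⟩
      have htend := tendsto_measure_iInter_atTop (μ := P)
        (fun n => (measurableSet_le (hZmeas j) measurable_const).nullMeasurableSet)
        hanti ⟨0, measure_ne_top P _⟩
      rw [hiempty, measure_empty] at htend
      obtain ⟨n, hn⟩ := (htend.eventually_lt_const (ENNReal.ofReal_pos.mpr hq0)).exists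
      exact ⟨n, ENNReal.toReal_lt_of_lt_ofReal hn⟩
    have hbdd : BddBelow {z : ℝ | q ≤ distFun P (Z j) z} := by
      refine ⟨-(n : ℝ), fun z hz => ?_⟩
      simp only [Set.mem_setOf_eq] at hz
      by_contra hlt
      push_neg at hlt
      have h2 : distFun P (Z j) z ≤ distFun P (Z j) (-(n : ℝ)) := hFmono j hlt.le
      linarith
    exact csInf_le hbdd hmem
  set q0 : ℝ := Finset.univ.sup' hne (fun j => 1 - c j) with hq0def
  have hub : ∀ j : Fin d, 1 - c j ≤ q0 := by
    intro j
    rw [hq0def]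
    exact Finset.le_sup' (fun j => 1 - c j) (Finset.mem_univ j)
  have hq0lt1 : q0 < 1 := by
    rw [hq0def, Finset.sup'_lt_iff]
    intro j _
    linarith [hcpos j]
  have hq0nonneg : 0 ≤ q0 := by
    refine le_trans ?_ (hub ⟨0, by omega⟩)
    linarith [hcle1 ⟨0, by omega⟩]
  have hSet : {q : ℝ | q ∈ Set.Ioo (0 : ℝ) 1 ∧ ∀ j, 0 < quantileFun P (Z j) q}
      = Set.Ioo q0 1 := by
    ext q
    simp only [Set.mem_setOf_eq, Set.mem_Ioo]
    constructor
    · rintro ⟨⟨hqa, hqb⟩, hpos⟩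
      refine ⟨?_, hqb⟩
      rw [hq0def, Finset.sup'_lt_iff]
      intro j _
      by_contra hle
      push_neg at hle
      exact absurd (hpos j) (not_lt.mpr (hquant0 j q hqa hle))
    · rintro ⟨hqa, hqb⟩
      have hqpos : 0 < q := lt_of_le_of_lt hq0nonneg hqa
      refine ⟨⟨hqpos, hqb⟩, fun j => ?_⟩
      have hjq : 1 - c j < q := lt_of_le_of_lt (hub j) hqa
      rw [hquant j q hjq hqb]
      exact Real.log_pos ((one_lt_div (by linarith)).mpr (by linarith))
  have hqstar' : qstar = q0 := by
    rw [hqstar, hSet, csInf_Ioo hq0lt1]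
  have main : ∀ q ∈ Set.Ioo q0 1,
      (P {ω | ∀ j, quantileFun P (Z j) q < Z j ω}).toReal / (1 - q)
        = ∫ ω, Finset.univ.inf' hne (fun j => V j ω) ∂P := by
    rintro q ⟨hqa, hqb⟩
    have h1q : 0 < 1 - q := by linarith
    have hu : ∀ j, quantileFun P (Z j) q = Real.log (c j / (1 - q)) :=
      fun j => hquant j q (lt_of_le_of_lt (hub j) hqa) hqb
    have hupos : ∀ j, 0 < Real.log (c j / (1 - q)) := fun j =>
      Real.log_pos ((one_lt_div h1q).mpr (by linarith [hub j]))
    set g : (Fin d → ℝ) → ℝ :=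
      fun t => Finset.univ.sup' hne
        (fun j => Real.log (c j / (1 - q)) - (t j - Finset.univ.sup' hne t)) with hgdef
    have hgmeas : Measurable g := by
      have h := Finset.measurable_sup' hne
        (f := fun j (t : Fin d → ℝ) => Real.log (c j / (1 - q)) - (t j - Finset.univ.sup' hne t))
        (fun j _ => measurable_const.sub (hWmeas j))
      have heq : (Finset.univ.sup' hne fun j (t : Fin d → ℝ) =>
          Real.log (c j / (1 - q)) - (t j - Finset.univ.sup' hne t)) = g := by
        funext t
        rw [Finset.sup'_apply, hgdef]
      rwa [heq] at h
    have hg0 : ∀ t, 0 ≤ g t := by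
      intro t
      rw [hgdef]
      refine le_trans ?_ (Finset.le_sup'
        (fun j => Real.log (c j / (1 - q)) - (t j - Finset.univ.sup' hne t))
        (Finset.mem_univ (⟨0, by omega⟩ : Fin d)))
      have h1 := hWle ⟨0, by omega⟩ t
      have h2 := hupos ⟨0, by omega⟩
      linarith
    have hset : {ω | ∀ j, quantileFun P (Z j) q < Z j ω} = {ω | g (T ω) < E ω} := by
      ext ω
      simp only [Set.mem_setOf_eq, hgdef, Finset.sup'_lt_iff, Finset.mem_univ, true_implies]
      constructor
      · intro h j
        have h2 := h j
        rw [hu j, hZ' j ω] at h2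
        linarith
      · intro h j
        have h2 := h j
        rw [hu j, hZ' j ω]
        linarith
    have hpt : ∀ ω, Real.exp (-(g (T ω)))
        = (1 - q) * Finset.univ.inf' hne (fun j => V j ω) := by
      intro ω
      rw [hgdef, neg_sup'_real hne, exp_inf'_real hne, mul_inf'_real hne _ h1q.le]
      congr 1
      funext j
      rw [hV' j ω,
        show -(Real.log (c j / (1 - q)) - (T ω j - Finset.univ.sup' hne (T ω)))
          = (T ω j - Finset.univ.sup' hne (T ω)) + -(Real.log (c j / (1 - q))) by ring,
        Real.exp_add, Real.exp_neg, Real.exp_log (div_pos (hcpos j) h1q), inv_div]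
      ring
    rw [hset, tail_formula P hE hT hExp hIndep g hgmeas hg0]
    have hI : ∫ ω, Real.exp (-(g (T ω))) ∂P
        = (1 - q) * ∫ ω, Finset.univ.inf' hne (fun j => V j ω) ∂P := by
      rw [← integral_const_mul]
      exact integral_congr_ae (Filter.Eventually.of_forall hpt)
    have hInonneg : 0 ≤ ∫ ω, Finset.univ.inf' hne (fun j => V j ω) ∂P := by
      refine integral_nonneg fun ω => ?_
      rw [Finset.le_inf'_iff]
      intro j _
      rw [hV' j ω]
      exact div_nonneg (Real.exp_pos _).le (hcpos j).le
    rw [hI, ENNReal.toReal_ofReal (mul_nonneg h1q.le hInonneg), mul_comm, mul_div_assoc,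
      div_self h1q.ne', mul_one]
  constructor
  · intro q hq
    rw [hqstar'] at hq
    exact main q hq
  · have hmem : Set.Ioo q0 1 ∈ nhdsWithin (1 : ℝ) (Set.Iio 1) :=
      Ioo_mem_nhdsLT_of_mem ⟨hq0lt1, le_refl 1⟩
    refine Filter.Tendsto.congr' ?_ tendsto_const_nhds
    filter_upwards [hmem] with q hq
    exact (main q hq).symm
end

section
/- Let d ≥ 1, let M ⊆ {1,…,d} be a set of masked indices with complement N, and let ζ, υ : R^d → R^d be differentiable functions. Define the masking map m : R^d → R^d by m(u)_j = u_j for j ∈ M and m(u)_j = 0 for j ∈ N, and define g : R^d → R^d by g(u)_j = u_j for j ∈ M and g(u)_j = u_j · exp(ζ(m(u))_j) + υ(m(u))_j for j ∈ N. Then g is differentiable at every u ∈ R^d, and the determinant of its derivative (Jacobian) at u equals ∏_{j ∈ N} exp(ζ(m(u))_j); in particular this determinant is strictly positive. -/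
theorem affine_coupling_layer_jacobian_det
    (d : ℕ) (hd : 1 ≤ d) (M : Finset (Fin d))
    (ζ υ : (Fin d → ℝ) → (Fin d → ℝ))
    (hζ : Differentiable ℝ ζ) (hυ : Differentiable ℝ υ)
    (m : (Fin d → ℝ) → (Fin d → ℝ))
    (hm : m = fun u j => if j ∈ M then u j else 0)
    (g : (Fin d → ℝ) → (Fin d → ℝ))
    (hg : g = fun u j => if j ∈ M then u j
      else u j * Real.exp (ζ (m u) j) + υ (m u) j) :
    ∀ u : Fin d → ℝ,
      DifferentiableAt ℝ g u ∧
      (fderiv ℝ g u).det = ∏ j ∈ Mᶜ, Real.exp (ζ (m u) j) ∧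
      0 < (fderiv ℝ g u).det := by
  intro u
  classical
  -- the masking map as a continuous linear map
  set P : (Fin d → ℝ) →L[ℝ] (Fin d → ℝ) :=
    ContinuousLinearMap.pi (fun j => if j ∈ M then ContinuousLinearMap.proj j else 0) with hP
  have hmP : m = ⇑P := by
    funext v j
    simp only [hm, hP, ContinuousLinearMap.pi_apply]
    by_cases h : j ∈ M <;> simp [h]
  set E : Fin d → ℝ := fun j => Real.exp (ζ (m u) j) with hE
  set Dζ := fderiv ℝ ζ (m u) with hDζ
  set Dυ := fderiv ℝ υ (m u) with hDυ
  set Lfun : Fin d → ((Fin d → ℝ) →L[ℝ] ℝ) := fun j =>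
      if j ∈ M then ContinuousLinearMap.proj j
      else E j • ContinuousLinearMap.proj j
        + (u j * E j) • ((ContinuousLinearMap.proj j).comp (Dζ.comp P))
        + (ContinuousLinearMap.proj j).comp (Dυ.comp P) with hLfun
  -- the candidate derivative
  set L : (Fin d → ℝ) →L[ℝ] (Fin d → ℝ) := ContinuousLinearMap.pi Lfun with hL
  have hPu : P u = m u := by rw [hmP]
  have hder : HasFDerivAt g L u := by
    rw [hL]
    refine hasFDerivAt_pi.2 ?_
    intro j
    by_cases h : j ∈ M
    · have hfun : (fun v => g v j) = fun v : Fin d → ℝ => v j := by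
        funext v; simp [hg, h]
      have hLj : Lfun j = ContinuousLinearMap.proj j := by simp [hLfun, h]
      rw [hfun, hLj]
      exact (ContinuousLinearMap.proj j : (Fin d → ℝ) →L[ℝ] ℝ).hasFDerivAt
    · have hfun : (fun v => g v j)
          = fun v : Fin d → ℝ => v j * Real.exp (ζ (P v) j) + υ (P v) j := by
        funext v; simp [hg, h, hmP]
      rw [hfun]
      have hPd : HasFDerivAt (⇑P) P u := P.hasFDerivAt
      have hζc : HasFDerivAt (fun v => ζ (P v)) (Dζ.comp P) u := by
        rw [hDζ, ← hPu]
        exact ((hζ (P u)).hasFDerivAt).comp u hPd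
      have hζj : HasFDerivAt (fun v => ζ (P v) j)
          ((ContinuousLinearMap.proj j).comp (Dζ.comp P)) u :=
        (ContinuousLinearMap.proj j : (Fin d → ℝ) →L[ℝ] ℝ).hasFDerivAt.comp u hζc
      have hexp : HasFDerivAt (fun v => Real.exp (ζ (P v) j))
          (Real.exp (ζ (P u) j) • ((ContinuousLinearMap.proj j).comp (Dζ.comp P))) u :=
        hζj.exp
      have hυc : HasFDerivAt (fun v => υ (P v)) (Dυ.comp P) u := by
        rw [hDυ, ← hPu]
        exact ((hυ (P u)).hasFDerivAt).comp u hPd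
      have hυj : HasFDerivAt (fun v => υ (P v) j)
          ((ContinuousLinearMap.proj j).comp (Dυ.comp P)) u :=
        (ContinuousLinearMap.proj j : (Fin d → ℝ) →L[ℝ] ℝ).hasFDerivAt.comp u hυc
      have hcoord : HasFDerivAt (fun v : Fin d → ℝ => v j)
          (ContinuousLinearMap.proj j : (Fin d → ℝ) →L[ℝ] ℝ) u :=
        (ContinuousLinearMap.proj j : (Fin d → ℝ) →L[ℝ] ℝ).hasFDerivAt
      refine ((hcoord.mul hexp).add hυj).congr_fderiv ?_
      rw [hPu]
      have hLj : Lfun j = E j • ContinuousLinearMap.proj j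
          + (u j * E j) • ((ContinuousLinearMap.proj j).comp (Dζ.comp P))
          + (ContinuousLinearMap.proj j).comp (Dυ.comp P) := by simp [hLfun, h]
      rw [hLj]
      ext v
      simp only [ContinuousLinearMap.add_apply, ContinuousLinearMap.smul_apply,
        ContinuousLinearMap.comp_apply, ContinuousLinearMap.proj_apply, smul_eq_mul, hE]
      ring
  have hfd : fderiv ℝ g u = L := hder.fderiv
  have hdiff : DifferentiableAt ℝ g u := hder.differentiableAt
  -- compute the matrix of L
  set b := Pi.basisFun ℝ (Fin d) with hb
  set A := LinearMap.toMatrix b b (L : (Fin d → ℝ) →ₗ[ℝ] (Fin d → ℝ)) with hA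
  have hdet : (fderiv ℝ g u).det = A.det := by
    rw [hfd, hA, LinearMap.det_toMatrix]
  have hAentry : ∀ i k, A i k = Lfun i (Pi.single k 1) := by
    intro i k
    rw [hA, LinearMap.toMatrix_apply]
    simp [hb, hL]
  -- P kills single k 1 for k ∉ M
  have hPsingle : ∀ k ∉ M, P (Pi.single k (1 : ℝ)) = 0 := by
    intro k hk
    funext j
    simp only [hP, ContinuousLinearMap.pi_apply]
    by_cases h : j ∈ M
    · have hjk : j ≠ k := fun hjk => hk (hjk ▸ h)
      simp only [h, if_true, ContinuousLinearMap.proj_apply]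
      simp [Pi.single_eq_of_ne hjk]
    · simp [h]
  -- entries
  have hMrow : ∀ i ∈ M, ∀ k, A i k = if i = k then 1 else 0 := by
    intro i hi k
    rw [hAentry]
    simp only [hLfun, hi, if_true, ContinuousLinearMap.proj_apply]
    by_cases h : i = k
    · subst h; simp
    · simp [Pi.single_eq_of_ne h, h]
  have hNrowN : ∀ i ∉ M, ∀ k ∉ M, A i k = if i = k then E i else 0 := by
    intro i hi k hk
    have h0 : Dζ (P (Pi.single k (1 : ℝ))) = 0 := by rw [hPsingle k hk, map_zero]
    have h1 : Dυ (P (Pi.single k (1 : ℝ))) = 0 := by rw [hPsingle k hk, map_zero]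
    rw [hAentry]
    simp only [hLfun, hi, if_neg, if_false, eq_self_iff_true, ContinuousLinearMap.add_apply,
      ContinuousLinearMap.smul_apply, ContinuousLinearMap.comp_apply,
      ContinuousLinearMap.proj_apply, h0, h1, Pi.zero_apply, smul_zero, add_zero,
      smul_eq_mul, mul_zero, h0, h1]
    by_cases h : i = k
    · subst h; simp
    · simp [Pi.single_eq_of_ne h, h]
  -- block decomposition
  set e : {j // j ∈ M} ⊕ {j // j ∉ M} ≃ Fin d := Equiv.sumCompl (· ∈ M) with he
  have hdet2 : A.det = (A.submatrix ⇑e ⇑e).det :=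
    (Matrix.det_submatrix_equiv_self e A).symm
  set C : Matrix {j // j ∉ M} {j // j ∈ M} ℝ := fun i k => A i.1 k.1 with hC
  have hsub : A.submatrix ⇑e ⇑e
      = Matrix.fromBlocks 1 0 C (Matrix.diagonal (fun j : {j // j ∉ M} => E j.1)) := by
    ext i k
    rcases i with i | i <;> rcases k with k | k <;>
      simp only [Matrix.submatrix_apply, he, Equiv.sumCompl_apply_inl,
        Equiv.sumCompl_apply_inr, Matrix.fromBlocks_apply₁₁, Matrix.fromBlocks_apply₁₂,
        Matrix.fromBlocks_apply₂₁, Matrix.fromBlocks_apply₂₂]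
    · rw [hMrow i.1 i.2 k.1, Matrix.one_apply]
      by_cases h : i = k
      · simp [h]
      · have h' : i.1 ≠ k.1 := fun hv => h (Subtype.ext hv)
        simp [h, h']
    · rw [hMrow i.1 i.2 k.1]
      have h' : i.1 ≠ k.1 := fun hv => k.2 (hv ▸ i.2)
      simp [h']
    · rfl
    · rw [hNrowN i.1 i.2 k.1 k.2, Matrix.diagonal_apply]
      by_cases h : i = k
      · simp [h]
      · have h' : i.1 ≠ k.1 := fun hv => h (Subtype.ext hv)
        simp [h, h']
  have hdet3 : A.det = ∏ j : {j // j ∉ M}, E j.1 := by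
    rw [hdet2, hsub, Matrix.det_fromBlocks_zero₁₂, Matrix.det_one, one_mul,
      Matrix.det_diagonal]
  have hprod : (∏ j ∈ Mᶜ, Real.exp (ζ (m u) j)) = ∏ j : {j // j ∉ M}, E j.1 := by
    rw [Finset.prod_subtype (Mᶜ) (fun x => Finset.mem_compl) (fun j => Real.exp (ζ (m u) j))]
  refine ⟨hdiff, ?_, ?_⟩
  · rw [hdet, hdet3, hprod]
  · rw [hdet, hdet3]
    exact Finset.prod_pos fun j _ => Real.exp_pos _
end
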